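/- arXiv:1705.01600 — 2 statements merged into one kernel-verified Lean document; each statement's English description precedes it below -/
import Mathlib

section
/- Suppose there are constants C_α > 0 and α > 0 such that for every i ≥ 0 and every real x ≥ 1 one has, almost surely, P(X_{i+1} > x | 𝓕_i) ≤ C_α x^{-α}. Fix β > 0 and γ with 0 < γ < min(α, β), and let ε₀ > 0 be determined by ε₀ (1 + γ C_α/(α−γ))^{1/γ} = 4^{-β/γ}. Then there is a constant C' > 0 depending only on β such that for all t ≥ 1, P( Σ_{k=1}^∞ 2^{-k} (ε₀^k Π_k)^{1−γ/β} > t^{β/γ − 1} ) ≤ C' t^{-β}. -/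
/-!
Conditioning on `ℱ i`, the tail bound yields `E[g X_{i+1}^γ] ≤ M E[g]` for every nonnegative
`ℱ i`-measurable `g`, where `M = 1 + γ C_α / (α - γ)` comes from the layer-cake formula split at
`1`. Iterating gives `E[Π_k^γ] ≤ M^k`, so the choice of `ε₀` makes `E[(ε₀^k Π_k)^γ] ≤ 4^{-βk}`.
Since the weights `2^{-k}` sum to `1`, the series can only exceed `t^{β/γ - 1}` if some
`ε₀^k Π_k` exceeds `t^{β/γ}`; Markov's inequality and a union bound then give
`∑_k 4^{-βk} t^{-β}`.
-/

open MeasureTheory Set Filter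
open scoped ENNReal

section ConditionalTail

variable {Ω : Type*} {m m0 : MeasurableSpace Ω} {μ : Measure Ω} [IsFiniteMeasure μ]
  {A : Set Ω} {c : ℝ}

theorem measure_inter_le_of_condExp_indicator_le (hm : m ≤ m0) (hA : MeasurableSet A)
    (hc : ∀ᵐ ω ∂μ, μ[A.indicator (fun _ => (1 : ℝ)) | m] ω ≤ c) {S : Set Ω}
    (hS : MeasurableSet[m] S) :
    μ (S ∩ A) ≤ ENNReal.ofReal c * μ S := by
  have hint : Integrable (A.indicator fun _ => (1 : ℝ)) μ := (integrable_const 1).indicator hA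
  have hSA : μ.real (S ∩ A) ≤ c * μ.real S := calc
    μ.real (S ∩ A) = ∫ ω in S, A.indicator (fun _ => (1 : ℝ)) ω ∂μ := by
      rw [integral_indicator_const _ hA, measureReal_restrict_apply hA, Set.inter_comm,
        smul_eq_mul, mul_one]
    _ = ∫ ω in S, μ[A.indicator (fun _ => (1 : ℝ)) | m] ω ∂μ :=
      (setIntegral_condExp hm hint hS).symm
    _ ≤ ∫ _ in S, c ∂μ :=
      setIntegral_mono_ae integrable_condExp.integrableOn (integrable_const c).integrableOn hc
    _ = c * μ.real S := by rw [setIntegral_const, smul_eq_mul, mul_comm]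
  calc μ (S ∩ A) = ENNReal.ofReal (μ.real (S ∩ A)) := (ofReal_measureReal).symm
    _ ≤ ENNReal.ofReal (c * μ.real S) := ENNReal.ofReal_le_ofReal hSA
    _ ≤ ENNReal.ofReal c * μ S := by
      rw [ENNReal.ofReal_mul' measureReal_nonneg, ofReal_measureReal]

theorem lintegral_restrict_le_of_condExp_indicator_le (hm : m ≤ m0) (hA : MeasurableSet A)
    (hc : ∀ᵐ ω ∂μ, μ[A.indicator (fun _ => (1 : ℝ)) | m] ω ≤ c) {g : Ω → ℝ≥0∞}
    (hg : Measurable[m] g) :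
    ∫⁻ ω in A, g ω ∂μ ≤ ENNReal.ofReal c * ∫⁻ ω, g ω ∂μ := by
  have hle : (μ.restrict A).trim hm ≤ ENNReal.ofReal c • μ.trim hm := by
    refine Measure.le_iff.2 fun S hS => ?_
    rw [trim_measurableSet_eq hm hS, Measure.smul_apply, trim_measurableSet_eq hm hS,
      Measure.restrict_apply (hm S hS), smul_eq_mul]
    exact measure_inter_le_of_condExp_indicator_le hm hA hc hS
  rw [← lintegral_trim hm hg, ← lintegral_trim hm hg, ← smul_eq_mul, ← lintegral_smul_measure]
  exact lintegral_mono' hle le_rfl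

end ConditionalTail

theorem lintegral_Ioc_zero_one_rpow {s : ℝ} (hs : -1 < s) :
    ∫⁻ t in Ioc (0 : ℝ) 1, ENNReal.ofReal (t ^ s) = ENNReal.ofReal (1 / (s + 1)) := by
  have hint : IntegrableOn (fun t : ℝ => t ^ s) (Ioc 0 1) := by
    simpa [intervalIntegrable_iff, uIoc_of_le zero_le_one] using
      intervalIntegral.intervalIntegrable_rpow' (a := 0) (b := 1) hs
  rw [← ofReal_integral_eq_lintegral_ofReal hint
    ((ae_restrict_mem measurableSet_Ioc).mono fun t ht => Real.rpow_nonneg ht.1.le s),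
    ← intervalIntegral.integral_of_le zero_le_one, integral_rpow (Or.inl hs), Real.one_rpow,
    Real.zero_rpow (by linarith), sub_zero]

theorem lintegral_Ioi_one_rpow {s : ℝ} (hs : s < -1) :
    ∫⁻ t in Ioi (1 : ℝ), ENNReal.ofReal (t ^ s) = ENNReal.ofReal (-1 / (s + 1)) := by
  rw [← ofReal_integral_eq_lintegral_ofReal (integrableOn_Ioi_rpow_of_lt hs one_pos)
    ((ae_restrict_mem measurableSet_Ioi).mono fun t ht => Real.rpow_nonneg (one_pos.trans ht).le s),
    integral_Ioi_rpow_of_lt hs one_pos, Real.one_rpow]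

theorem lintegral_rpow_le_of_meas_lt_le {Ω : Type*} [MeasurableSpace Ω] (ν : Measure Ω)
    {Y : Ω → ℝ} (hY : Measurable Y) (hY0 : ∀ ω, 0 ≤ Y ω) {C α γ : ℝ} (hC : 0 ≤ C) (hγ : 0 < γ)
    (hγα : γ < α) (htail : ∀ t, 1 < t → ν {ω | t < Y ω} ≤ ENNReal.ofReal (C * t ^ (-α)) * ν univ) :
    ∫⁻ ω, ENNReal.ofReal (Y ω ^ γ) ∂ν ≤ ENNReal.ofReal (1 + γ * C / (α - γ)) * ν univ := by
  have hsmall : ∫⁻ t in Ioc (0 : ℝ) 1, ν {ω | t < Y ω} * ENNReal.ofReal (t ^ (γ - 1))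
      ≤ ν univ * ENNReal.ofReal (1 / γ) := calc
    _ ≤ ∫⁻ t in Ioc (0 : ℝ) 1, ν univ * ENNReal.ofReal (t ^ (γ - 1)) :=
      lintegral_mono fun t => by gcongr; exact subset_univ _
    _ = ν univ * ENNReal.ofReal (1 / γ) := by
      rw [lintegral_const_mul _ (by fun_prop), lintegral_Ioc_zero_one_rpow (by linarith),
        sub_add_cancel]
  have hlarge : ∫⁻ t in Ioi (1 : ℝ), ν {ω | t < Y ω} * ENNReal.ofReal (t ^ (γ - 1))
      ≤ ν univ * ENNReal.ofReal (C / (α - γ)) := calc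
    _ ≤ ∫⁻ t in Ioi (1 : ℝ), ν univ * ENNReal.ofReal C * ENNReal.ofReal (t ^ (γ - 1 - α)) := by
      refine setLIntegral_mono' measurableSet_Ioi fun t (ht : 1 < t) => ?_
      have ht0 : 0 < t := one_pos.trans ht
      calc ν {ω | t < Y ω} * ENNReal.ofReal (t ^ (γ - 1))
          ≤ ENNReal.ofReal (C * t ^ (-α)) * ν univ * ENNReal.ofReal (t ^ (γ - 1)) := by
            gcongr; exact htail t ht
        _ = ν univ * ENNReal.ofReal C * ENNReal.ofReal (t ^ (γ - 1 - α)) := by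
          rw [sub_eq_add_neg (γ - 1), Real.rpow_add ht0, ENNReal.ofReal_mul hC,
            ENNReal.ofReal_mul (by positivity)]
          ring
    _ = ν univ * ENNReal.ofReal (C / (α - γ)) := by
      rw [lintegral_const_mul _ (by fun_prop), lintegral_Ioi_one_rpow (by linarith), mul_assoc,
        ← ENNReal.ofReal_mul hC]
      congr 3
      rw [show γ - 1 - α + 1 = -(α - γ) by ring, neg_div_neg_eq, one_div]
  rw [lintegral_rpow_eq_lintegral_meas_lt_mul ν (Eventually.of_forall hY0) hY.aemeasurable hγ,
    ← Ioc_union_Ioi_eq_Ioi zero_le_one,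
    lintegral_union measurableSet_Ioi (Ioc_disjoint_Ioi le_rfl)]
  calc ENNReal.ofReal γ * (_ + _)
      ≤ ENNReal.ofReal γ *
          (ν univ * ENNReal.ofReal (1 / γ) + ν univ * ENNReal.ofReal (C / (α - γ))) := by
        gcongr
    _ = ENNReal.ofReal (1 + γ * C / (α - γ)) * ν univ := by
      have hαγ : 0 < α - γ := by linarith
      rw [← mul_add, ← ENNReal.ofReal_add (by positivity) (by positivity), mul_left_comm,
        ← ENNReal.ofReal_mul hγ.le, mul_comm, mul_add, mul_one_div_cancel hγ.ne', mul_div_assoc]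

theorem lintegral_mul_rpow_le_of_condExp_tail_le {Ω : Type*} {m m0 : MeasurableSpace Ω}
    (μ : Measure Ω) [IsFiniteMeasure μ] (hm : m ≤ m0) {Y : Ω → ℝ} (hY : Measurable Y)
    (hY0 : ∀ ω, 0 ≤ Y ω) {C α γ : ℝ} (hC : 0 ≤ C) (hγ : 0 < γ) (hγα : γ < α)
    (htail : ∀ x : ℝ, 1 ≤ x →
      ∀ᵐ ω ∂μ, μ[{ω' | x < Y ω'}.indicator (fun _ => (1 : ℝ)) | m] ω ≤ C * x ^ (-α))
    {g : Ω → ℝ≥0∞} (hg : Measurable[m] g) :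
    ∫⁻ ω, g ω * ENNReal.ofReal (Y ω ^ γ) ∂μ
      ≤ ENNReal.ofReal (1 + γ * C / (α - γ)) * ∫⁻ ω, g ω ∂μ := by
  have hwd := lintegral_withDensity_eq_lintegral_mul μ (hg.mono hm le_rfl)
    (hY.pow_const γ).ennreal_ofReal
  simp only [Pi.mul_apply] at hwd
  have hmass : ∫⁻ ω, g ω ∂μ = μ.withDensity g univ := by
    rw [withDensity_apply _ MeasurableSet.univ, setLIntegral_univ]
  rw [← hwd, hmass]
  refine lintegral_rpow_le_of_meas_lt_le _ hY hY0 hC hγ hγα fun t ht => ?_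
  have hA : MeasurableSet {ω | t < Y ω} := measurableSet_lt measurable_const hY
  rw [withDensity_apply _ hA, ← hmass]
  exact lintegral_restrict_le_of_condExp_indicator_le hm hA (htail t ht.le) hg

section Products

variable {Ω : Type*} {m0 : MeasurableSpace Ω} {ℱ : Filtration ℕ m0} {X : ℕ → Ω → ℝ}

theorem prod_Icc_one_nonneg (hX0 : ∀ i ω, 0 ≤ X (i + 1) ω) (k : ℕ) (ω : Ω) :
    0 ≤ ∏ j ∈ Finset.Icc 1 k, X j ω := by
  induction k with
  | zero => simp
  | succ k ih => rw [Finset.prod_Icc_succ_top (by omega)]; exact mul_nonneg ih (hX0 k ω)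

theorem stronglyMeasurable_prod_Icc_one
    (hXmeas : ∀ i, StronglyMeasurable[ℱ (i + 1)] (X (i + 1))) (k : ℕ) :
    StronglyMeasurable[ℱ k] fun ω => ∏ j ∈ Finset.Icc 1 k, X j ω := by
  induction k with
  | zero => simpa using stronglyMeasurable_const
  | succ k ih =>
    simp_rw [Finset.prod_Icc_succ_top (Nat.le_add_left 1 k)]
    exact (ih.mono (ℱ.mono k.le_succ)).mul (hXmeas k)

theorem lintegral_prod_Icc_one_rpow_le (μ : Measure Ω) [IsProbabilityMeasure μ]
    (hXmeas : ∀ i, StronglyMeasurable[ℱ (i + 1)] (X (i + 1))) (hX0 : ∀ i ω, 0 ≤ X (i + 1) ω)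
    {γ : ℝ} {M : ℝ≥0∞}
    (hstep : ∀ i (g : Ω → ℝ≥0∞), Measurable[ℱ i] g →
      ∫⁻ ω, g ω * ENNReal.ofReal (X (i + 1) ω ^ γ) ∂μ ≤ M * ∫⁻ ω, g ω ∂μ) (k : ℕ) :
    ∫⁻ ω, ENNReal.ofReal ((∏ j ∈ Finset.Icc 1 k, X j ω) ^ γ) ∂μ ≤ M ^ k := by
  induction k with
  | zero => simp
  | succ k ih =>
    calc ∫⁻ ω, ENNReal.ofReal ((∏ j ∈ Finset.Icc 1 (k + 1), X j ω) ^ γ) ∂μ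
        = ∫⁻ ω, ENNReal.ofReal ((∏ j ∈ Finset.Icc 1 k, X j ω) ^ γ)
            * ENNReal.ofReal (X (k + 1) ω ^ γ) ∂μ := by
          refine lintegral_congr fun ω => ?_
          have hP := prod_Icc_one_nonneg hX0 k ω
          rw [Finset.prod_Icc_succ_top (by omega), Real.mul_rpow hP (hX0 k ω),
            ENNReal.ofReal_mul (by positivity)]
      _ ≤ M * ∫⁻ ω, ENNReal.ofReal ((∏ j ∈ Finset.Icc 1 k, X j ω) ^ γ) ∂μ :=
          hstep k _
            ((stronglyMeasurable_prod_Icc_one hXmeas k).measurable.pow_const γ).ennreal_ofReal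
      _ ≤ M * M ^ k := by gcongr
      _ = M ^ (k + 1) := (pow_succ' M k).symm

theorem lintegral_prod_Icc_one_rpow_le_of_condExp_tail_le (μ : Measure Ω)
    [IsProbabilityMeasure μ] (hXmeas : ∀ i, StronglyMeasurable[ℱ (i + 1)] (X (i + 1)))
    (hX0 : ∀ i ω, 0 ≤ X (i + 1) ω) {C α γ : ℝ} (hC : 0 ≤ C) (hγ : 0 < γ) (hγα : γ < α)
    (htail : ∀ i : ℕ, ∀ x : ℝ, 1 ≤ x →
      ∀ᵐ ω ∂μ, μ[{ω' | x < X (i + 1) ω'}.indicator (fun _ => (1 : ℝ)) | ℱ i] ω ≤ C * x ^ (-α))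
    (k : ℕ) :
    ∫⁻ ω, ENNReal.ofReal ((∏ j ∈ Finset.Icc 1 k, X j ω) ^ γ) ∂μ
      ≤ ENNReal.ofReal (1 + γ * C / (α - γ)) ^ k :=
  lintegral_prod_Icc_one_rpow_le μ hXmeas hX0 (fun i _ hg =>
    lintegral_mul_rpow_le_of_condExp_tail_le μ (ℱ.le i) ((hXmeas i).mono (ℱ.le _)).measurable
      (hX0 i) hC hγ hγα (htail i) hg) k

end Products

theorem lintegral_ofReal_rpow_const_pow_mul {Ω : Type*} [MeasurableSpace Ω] (μ : Measure Ω)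
    {Z : Ω → ℝ} (hZ0 : ∀ ω, 0 ≤ Z ω) {ε : ℝ} (hε : 0 ≤ ε) (γ : ℝ) (n : ℕ) :
    ∫⁻ ω, ENNReal.ofReal ((ε ^ n * Z ω) ^ γ) ∂μ
      = ENNReal.ofReal (ε ^ γ) ^ n * ∫⁻ ω, ENNReal.ofReal (Z ω ^ γ) ∂μ := by
  rw [← lintegral_const_mul' _ _ (ENNReal.pow_ne_top ENNReal.ofReal_ne_top)]
  refine lintegral_congr fun ω => ?_
  rw [Real.mul_rpow (by positivity) (hZ0 ω), ← Real.rpow_pow_comm hε,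
    ENNReal.ofReal_mul (by positivity), ENNReal.ofReal_pow (by positivity)]

theorem measure_lt_le_lintegral_rpow_div {Ω : Type*} [MeasurableSpace Ω] (μ : Measure Ω)
    {Z : Ω → ℝ} (hZ : AEMeasurable Z μ) {s γ : ℝ} (hs : 0 < s) (hγ : 0 ≤ γ) :
    μ {ω | s < Z ω} ≤ (∫⁻ ω, ENNReal.ofReal (Z ω ^ γ) ∂μ) / ENNReal.ofReal (s ^ γ) :=
  (measure_mono fun _ (hω : s < _) =>
      ENNReal.ofReal_le_ofReal (Real.rpow_le_rpow hs.le hω.le hγ)).trans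
    (meas_ge_le_lintegral_div (by fun_prop)
      (ENNReal.ofReal_pos.2 (Real.rpow_pos_of_pos hs γ)).ne' ENNReal.ofReal_ne_top)

theorem tsum_ofReal_half_pow_mul_rpow_le {a : ℕ → ℝ} {s p : ℝ} (ha0 : ∀ k, 0 ≤ a k)
    (has : ∀ k, a k ≤ s) (hp : 0 ≤ p) :
    ∑' k : ℕ, ENNReal.ofReal ((1 / 2 : ℝ) ^ (k + 1) * a k ^ p) ≤ ENNReal.ofReal (s ^ p) := calc
  _ ≤ ∑' k : ℕ, 2⁻¹ ^ (k + 1) * ENNReal.ofReal (s ^ p) := ENNReal.tsum_le_tsum fun k => by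
      rw [ENNReal.ofReal_mul (by positivity), ENNReal.ofReal_pow (by norm_num), one_div,
        ENNReal.ofReal_inv_of_pos two_pos, ENNReal.ofReal_ofNat]
      gcongr _ * ENNReal.ofReal ?_
      exact Real.rpow_le_rpow (ha0 k) (has k) hp
  _ = ENNReal.ofReal (s ^ p) := by
      rw [ENNReal.tsum_mul_right, ENNReal.tsum_geometric_add_one, ENNReal.one_sub_inv_two,
        inv_inv, ENNReal.inv_mul_cancel two_ne_zero ENNReal.ofNat_ne_top, one_mul]

theorem measure_lt_tsum_half_pow_mul_rpow_le {Ω : Type*} [MeasurableSpace Ω] (μ : Measure Ω)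
    {a : ℕ → Ω → ℝ} (ha0 : ∀ k ω, 0 ≤ a k ω) {s p : ℝ} (hp : 0 ≤ p) :
    μ {ω | ENNReal.ofReal (s ^ p) < ∑' k : ℕ, ENNReal.ofReal ((1 / 2 : ℝ) ^ (k + 1) * a k ω ^ p)}
      ≤ ∑' k, μ {ω | s < a k ω} := by
  refine (measure_mono fun ω (hω : ENNReal.ofReal (s ^ p) < _) => ?_).trans (measure_iUnion_le _)
  by_contra h
  simp only [mem_iUnion, mem_ofPred_eq, not_exists, not_lt] at h
  exact (tsum_ofReal_half_pow_mul_rpow_le (ha0 · ω) h hp).not_gt hω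

theorem tsum_ofReal_pow_succ_div {q c : ℝ} (hq0 : 0 ≤ q) (hq1 : q < 1) (hc : 0 < c) :
    ∑' k : ℕ, ENNReal.ofReal q ^ (k + 1) / ENNReal.ofReal c = ENNReal.ofReal (q / (1 - q) / c) := by
  simp_rw [div_eq_mul_inv]
  rw [ENNReal.tsum_mul_right, ENNReal.tsum_geometric_add_one, ← ENNReal.ofReal_one,
    ← ENNReal.ofReal_sub _ hq0, ← ENNReal.ofReal_inv_of_pos (by linarith),
    ← ENNReal.ofReal_inv_of_pos hc, ← ENNReal.ofReal_mul hq0, ← ENNReal.ofReal_mul (by positivity)]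

theorem rpow_mul_eq_of_mul_rpow_one_div_eq {ε M a b γ : ℝ} (hε : 0 ≤ ε) (hM : 0 ≤ M)
    (ha : 0 ≤ a) (hγ : γ ≠ 0) (h : ε * M ^ (1 / γ) = a ^ (b / γ)) : ε ^ γ * M = a ^ b := by
  have h' := congrArg (· ^ γ) h
  rwa [Real.mul_rpow hε (by positivity), ← Real.rpow_mul hM, one_div_mul_cancel hγ,
    Real.rpow_one, ← Real.rpow_mul ha, div_mul_cancel₀ _ hγ] at h'

theorem stmt4_general {Ω : Type*} {m0 : MeasurableSpace Ω} (μ : Measure Ω) [IsProbabilityMeasure μ]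
    (ℱ : Filtration ℕ m0) (X : ℕ → Ω → ℝ)
    (hXmeas : ∀ i : ℕ, StronglyMeasurable[ℱ (i + 1)] (X (i + 1)))
    (hX0 : ∀ (i : ℕ) (ω : Ω), 0 ≤ X (i + 1) ω)
    (Cα α : ℝ) (hCα : 0 < Cα)
    (hXtail : ∀ i : ℕ, ∀ x : ℝ, 1 ≤ x →
      ∀ᵐ ω ∂μ,
        (μ[Set.indicator {ω' | x < X (i + 1) ω'} (fun _ => (1 : ℝ)) | ℱ i]) ω ≤ Cα * x ^ (-α))
    (β γ : ℝ) (hβ : 0 < β) (hγ0 : 0 < γ) (hγ : γ < min α β)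
    (ε₀ : ℝ) (hε₀pos : 0 < ε₀)
    (hε₀ : ε₀ * (1 + γ * Cα / (α - γ)) ^ (1 / γ) = (4 : ℝ) ^ (-β / γ)) :
    ∃ C' > (0 : ℝ), ∀ t : ℝ, 1 ≤ t →
      μ {ω |
          ENNReal.ofReal (t ^ (β / γ - 1)) <
            ∑' k : ℕ,
              ENNReal.ofReal
                ((1 / 2 : ℝ) ^ (k + 1) *
                  (ε₀ ^ (k + 1) * ∏ j ∈ Finset.Icc 1 (k + 1), X j ω) ^ (1 - γ / β))}
        ≤ ENNReal.ofReal (C' * t ^ (-β)) := by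
  have hγα : γ < α := hγ.trans_le (min_le_left α β)
  have hγβ : γ < β := hγ.trans_le (min_le_right α β)
  set M := 1 + γ * Cα / (α - γ)
  set q : ℝ := 4 ^ (-β)
  have hq0 : 0 < q := by positivity
  have hq1 : q < 1 := Real.rpow_lt_one_of_one_lt_of_neg (by norm_num) (by linarith)
  have hM0 : 0 ≤ M := by have := sub_pos.2 hγα; positivity
  have hεM : ε₀ ^ γ * M = q :=
    rpow_mul_eq_of_mul_rpow_one_div_eq hε₀pos.le hM0 (by norm_num) hγ0.ne' hε₀
  have hmom (n : ℕ) :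
      ∫⁻ ω, ENNReal.ofReal ((ε₀ ^ n * ∏ j ∈ Finset.Icc 1 n, X j ω) ^ γ) ∂μ
        ≤ ENNReal.ofReal q ^ n := by
    rw [lintegral_ofReal_rpow_const_pow_mul μ (prod_Icc_one_nonneg hX0 n) hε₀pos.le, ← hεM,
      ENNReal.ofReal_mul (by positivity), mul_pow]
    gcongr
    exact lintegral_prod_Icc_one_rpow_le_of_condExp_tail_le μ hXmeas hX0 hCα.le hγ0 hγα hXtail n
  refine ⟨q / (1 - q), div_pos hq0 (sub_pos.2 hq1), fun t ht => ?_⟩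
  have ht0 : 0 < t := one_pos.trans_le ht
  have hexp : t ^ (β / γ - 1) = (t ^ (β / γ)) ^ (1 - γ / β) := by
    rw [← Real.rpow_mul ht0.le]; congr 1; field_simp
  calc _ ≤ ∑' k : ℕ, μ {ω | t ^ (β / γ) < ε₀ ^ (k + 1) * ∏ j ∈ Finset.Icc 1 (k + 1), X j ω} := by
        rw [hexp]
        refine measure_lt_tsum_half_pow_mul_rpow_le μ (fun k ω => ?_) ?_
        · have := prod_Icc_one_nonneg hX0 (k + 1) ω; positivity
        · rw [sub_nonneg, div_le_one hβ]; exact hγβ.le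
    _ ≤ ∑' k : ℕ, ENNReal.ofReal q ^ (k + 1) / ENNReal.ofReal (t ^ β) := by
        refine ENNReal.tsum_le_tsum fun k => ?_
        refine (measure_lt_le_lintegral_rpow_div μ ?_ (by positivity) hγ0.le).trans ?_
        · exact (((stronglyMeasurable_prod_Icc_one hXmeas (k + 1)).mono
            (ℱ.le _)).measurable.const_mul _).aemeasurable
        · rw [← Real.rpow_mul ht0.le, div_mul_cancel₀ _ hγ0.ne']
          gcongr
          exact hmom (k + 1)
    _ = ENNReal.ofReal (q / (1 - q) * t ^ (-β)) := by
        rw [tsum_ofReal_pow_succ_div hq0.le hq1 (by positivity), Real.rpow_neg ht0.le,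
          div_eq_mul_inv]

/-- With the conditional tail bound `P(X_{i+1} > x | ℱ i) ≤ C_α x^{-α}` (`x ≥ 1`),
fix `β > 0` and `0 < γ < min α β`, and let `ε₀ > 0` satisfy
`ε₀ (1 + γ C_α/(α-γ))^{1/γ} = 4^{-β/γ}`. Then there is `C' > 0` (depending only on `β`) such
that for all `t ≥ 1`,
`P( Σ_{k=1}^∞ 2^{-k}(ε₀^k Π_k)^{1-γ/β} > t^{β/γ - 1} ) ≤ C' t^{-β}`, with `Π_k = ∏_{j=1}^k X_j`
(the series, a pointwise sum of nonnegative terms, is formalized in `ℝ≥0∞`). -/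
theorem stmt4 {Ω : Type*} {m0 : MeasurableSpace Ω} (μ : Measure Ω) [IsProbabilityMeasure μ]
    (ℱ : Filtration ℕ m0) (X : ℕ → Ω → ℝ)
    (hXmeas : ∀ i : ℕ, StronglyMeasurable[ℱ (i + 1)] (X (i + 1)))
    (hX0 : ∀ (i : ℕ) (ω : Ω), 0 ≤ X (i + 1) ω)
    (Cα α : ℝ) (hCα : 0 < Cα) (hα : 0 < α)
    (hXtail : ∀ i : ℕ, ∀ x : ℝ, 1 ≤ x →
      ∀ᵐ ω ∂μ,
        (μ[Set.indicator {ω' | x < X (i + 1) ω'} (fun _ => (1 : ℝ)) | ℱ i]) ω ≤ Cα * x ^ (-α))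
    (β γ : ℝ) (hβ : 0 < β) (hγ0 : 0 < γ) (hγ : γ < min α β)
    (ε₀ : ℝ) (hε₀pos : 0 < ε₀)
    (hε₀ : ε₀ * (1 + γ * Cα / (α - γ)) ^ (1 / γ) = (4 : ℝ) ^ (-β / γ)) :
    ∃ C' > (0 : ℝ), ∀ t : ℝ, 1 ≤ t →
      μ {ω |
          ENNReal.ofReal (t ^ (β / γ - 1)) <
            ∑' k : ℕ,
              ENNReal.ofReal
                ((1 / 2 : ℝ) ^ (k + 1) *
                  (ε₀ ^ (k + 1) * ∏ j ∈ Finset.Icc 1 (k + 1), X j ω) ^ (1 - γ / β))}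
        ≤ ENNReal.ofReal (C' * t ^ (-β)) :=
  stmt4_general μ ℱ X hXmeas hX0 Cα α hCα hXtail β γ hβ hγ0 hγ ε₀ hε₀pos hε₀
end

section
/- For any word I = (i₁, …, i_N) ∈ {1,2}^N of length N ≥ n + 2, the iterated Lie bracket V_I is identically zero on ℝ^d. In particular, all iterated Lie brackets of V₁ and V₂ involving at least n + 1 bracket operations vanish, so the family {V₁, V₂} generates a nilpotent Lie algebra of vector fields. -/
open MvPolynomial

/-- Lie bracket of vector fields on ℝ^d: `[U,V](x) = DV(x)·U(x) − DU(x)·V(x)`. -/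
noncomputable def lieBracketVF {d : ℕ} (U V : (Fin d → ℝ) → (Fin d → ℝ)) :
    (Fin d → ℝ) → (Fin d → ℝ) :=
  fun x => fderiv ℝ V x (U x) - fderiv ℝ U x (V x)

/-- The driving vector fields `V_i(x) = e_i + Σ_{j ≥ 3} σ_{i,j}(x₁,x₂) e_j`, `i = 1,2`
(zero-based: `i : Fin 2`, components of `ℝ^d` indexed by `Fin d`, the "first two"
coordinates being indices `0, 1` and the remaining ones the indices `j ≥ 2`). -/
noncomputable def driftField (d : ℕ) (hd : 3 ≤ d)
    (σ : Fin 2 → Fin d → MvPolynomial (Fin 2) ℝ) (i : Fin 2) :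
    (Fin d → ℝ) → (Fin d → ℝ) :=
  fun x j =>
    (if (j : ℕ) = (i : ℕ) then 1 else 0) +
      (if 2 ≤ (j : ℕ) then
        MvPolynomial.eval (fun k : Fin 2 => x (Fin.castLE (by omega) k)) (σ i j)
      else 0)

/-- Right-nested iterated Lie bracket over a word `I ∈ {1,2}^N`:
`V_I = [V_{i₁}, [V_{i₂}, [... [V_{i_{N-1}}, V_{i_N}] ...]]]` (empty word ↦ 0). -/
noncomputable def wordBracket {d : ℕ} (V : Fin 2 → (Fin d → ℝ) → (Fin d → ℝ)) :
    List (Fin 2) → (Fin d → ℝ) → (Fin d → ℝ)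
  | [] => fun _ _ => 0
  | [i] => V i
  | i :: j :: l => lieBracketVF (V i) (wordBracket V (j :: l))

/-!
Each `V_i` is the constant field `e_i` plus a vertical part whose coefficients are polynomials
in `(x₁, x₂)`, and this shape is stable under brackets: bracketing with `V_i` differentiates the
vertical coefficients by `∂_i`, because the horizontal part of every such field is constant.
Hence the bracket over the word `l ++ [a, b]` has vertical coefficients
`∂_l (∂_a σ_b − ∂_b σ_a)`, which vanish as soon as `|l| + 1 > n ≥ deg σ`.
-/

namespace MvPolynomial

section PDeriv

variable {R σ : Type*} [CommSemiring R]

theorem totalDegree_pderiv_le (i : σ) (p : MvPolynomial σ R) :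
    (pderiv i p).totalDegree ≤ p.totalDegree - 1 := by
  refine Finset.sup_le fun s hs => ?_
  rw [mem_support_iff, coeff_pderiv] at hs
  have hdeg := le_totalDegree (mem_support_iff.2 (left_ne_zero_of_mul hs))
  rw [Finsupp.sum_add_index' (fun _ => rfl) (fun _ _ _ => rfl),
    Finsupp.sum_single_index rfl] at hdeg
  omega

theorem totalDegree_foldr_pderiv_le (l : List σ) (p : MvPolynomial σ R) :
    (l.foldr (fun i => pderiv i) p).totalDegree ≤ p.totalDegree - l.length := by
  induction l with
  | nil => simp
  | cons i l ih =>
    exact (totalDegree_pderiv_le i _).trans (by simp only [List.length_cons]; omega)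

theorem foldr_pderiv_eq_zero_of_totalDegree_lt (l : List σ) (p : MvPolynomial σ R)
    (hl : p.totalDegree < l.length) : l.foldr (fun i => pderiv i) p = 0 := by
  obtain ⟨i, l, rfl⟩ := List.exists_cons_of_length_pos (by omega : 0 < l.length)
  have hconst : (l.foldr (fun i => pderiv i) p).totalDegree = 0 := by
    have := totalDegree_foldr_pderiv_le l p
    simp only [List.length_cons] at hl
    omega
  rw [List.foldr_cons, totalDegree_eq_zero_iff_eq_C.1 hconst, pderiv_C]

variable [Fintype σ]

noncomputable def pderivAlong (a : σ → R) (p : MvPolynomial σ R) : MvPolynomial σ R :=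
  ∑ k, a k • pderiv k p

theorem pderivAlong_single [DecidableEq σ] (i : σ) (p : MvPolynomial σ R) :
    pderivAlong (Pi.single i 1) p = pderiv i p := by
  simp [pderivAlong, Pi.single_apply]

@[simp]
theorem pderivAlong_zero (p : MvPolynomial σ R) : pderivAlong (fun _ => 0) p = 0 := by
  simp [pderivAlong]

end PDeriv

variable {𝕜 σ : Type*} [NontriviallyNormedField 𝕜] [Fintype σ]

theorem hasFDerivAt_eval (p : MvPolynomial σ 𝕜) (x : σ → 𝕜) :
    HasFDerivAt (fun y => eval y p)
      (∑ k, eval x (pderiv k p) • (ContinuousLinearMap.proj k : (σ → 𝕜) →L[𝕜] 𝕜)) x := by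
  classical
  induction p using MvPolynomial.induction_on with
  | C a =>
    simp only [eval_C]
    exact (hasFDerivAt_const a x).congr_fderiv (ContinuousLinearMap.ext fun v => by simp)
  | add p q hp hq =>
    simp only [map_add]
    exact (hp.add hq).congr_fderiv (by ext; simp [add_mul, Finset.sum_add_distrib])
  | mul_X p k hp =>
    simp only [eval_mul, eval_X]
    refine (hp.mul (hasFDerivAt_apply k x)).congr_fderiv (ContinuousLinearMap.ext fun v => ?_)
    simp [pderiv_X, Pi.single_apply, add_mul, Finset.sum_add_distrib, Finset.mul_sum,
      apply_ite (eval x), ite_mul, mul_assoc]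

theorem fderiv_eval_apply (p : MvPolynomial σ 𝕜) (x v : σ → 𝕜) :
    fderiv 𝕜 (fun y => eval y p) x v = eval x (pderivAlong v p) := by
  simp [(hasFDerivAt_eval p x).fderiv, pderivAlong, smul_eval, mul_comm]

end MvPolynomial

section PolyField

variable {d m : ℕ} (h : m ≤ d)

noncomputable def horizontalProj : (Fin d → ℝ) →L[ℝ] (Fin m → ℝ) :=
  ContinuousLinearMap.pi fun k => ContinuousLinearMap.proj (Fin.castLE h k)

@[simp]
theorem horizontalProj_apply (x : Fin d → ℝ) :
    horizontalProj h x = fun k => x (Fin.castLE h k) :=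
  rfl

noncomputable def polyField (c : Fin d → ℝ) (q : Fin d → MvPolynomial (Fin m) ℝ) :
    (Fin d → ℝ) → (Fin d → ℝ) :=
  fun x j => c j + if m ≤ (j : ℕ) then eval (fun k => x (Fin.castLE h k)) (q j) else 0

theorem polyField_castLE (c : Fin d → ℝ) (q : Fin d → MvPolynomial (Fin m) ℝ)
    (x : Fin d → ℝ) (k : Fin m) :
    polyField h c q x (Fin.castLE h k) = c (Fin.castLE h k) := by
  simp [polyField, k.isLt]

theorem fderiv_polyField_apply (c : Fin d → ℝ) (q : Fin d → MvPolynomial (Fin m) ℝ)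
    (x v : Fin d → ℝ) :
    fderiv ℝ (polyField h c q) x v =
      polyField h 0 (fun j => pderivAlong (fun k => v (Fin.castLE h k)) (q j)) x := by
  have heval : ∀ p : MvPolynomial (Fin m) ℝ,
      HasFDerivAt (fun y => eval (horizontalProj h y) p)
        ((fderiv ℝ (fun z => eval z p) (horizontalProj h x)).comp (horizontalProj h)) x :=
    fun p => (hasFDerivAt_eval p _).differentiableAt.hasFDerivAt.comp x
      (horizontalProj h).hasFDerivAt
  have hcomp : ∀ j, HasFDerivAt (fun y => polyField h c q y j)
      (if m ≤ (j : ℕ) then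
        (fderiv ℝ (fun z => eval z (q j)) (horizontalProj h x)).comp (horizontalProj h)
      else 0) x := by
    intro j
    by_cases hj : m ≤ (j : ℕ)
    · simpa [polyField, hj] using (heval (q j)).const_add (c j)
    · simpa [polyField, hj] using hasFDerivAt_const (c j) x
  rw [(hasFDerivAt_pi.2 hcomp).fderiv]
  ext j
  by_cases hj : m ≤ (j : ℕ) <;> simp [polyField, hj, fderiv_eval_apply]

theorem lieBracketVF_polyField (c c' : Fin d → ℝ) (q q' : Fin d → MvPolynomial (Fin m) ℝ) :
    lieBracketVF (polyField h c q) (polyField h c' q') =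
      polyField h 0 (fun j => pderivAlong (fun k => c (Fin.castLE h k)) (q' j) -
        pderivAlong (fun k => c' (Fin.castLE h k)) (q j)) := by
  funext x j
  simp only [lieBracketVF, fderiv_polyField_apply, polyField_castLE]
  by_cases hj : m ≤ (j : ℕ) <;> simp [polyField, hj]

theorem pderivAlong_indicator_castLE (i : Fin m) (p : MvPolynomial (Fin m) ℝ) :
    pderivAlong (fun k => if ((Fin.castLE h k : Fin d) : ℕ) = (i : ℕ) then 1 else 0) p =
      pderiv i p := by
  rw [← pderivAlong_single]
  congr
  ext k
  simp [Pi.single_apply, Fin.ext_iff]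

end PolyField

theorem List.exists_eq_append_pair {α : Type*} {I : List α} (hI : 2 ≤ I.length) :
    ∃ l a b, I = l ++ [a, b] := by
  obtain ⟨b, w, hw⟩ := List.exists_cons_of_length_pos (l := I.reverse)
    (by rw [List.length_reverse]; omega)
  have hw_len := congrArg List.length hw
  rw [List.length_reverse, List.length_cons] at hw_len
  obtain ⟨a, r, rfl⟩ := List.exists_cons_of_length_pos (l := w) (by omega)
  exact ⟨r.reverse, a, b, by rw [← List.reverse_reverse I, hw]; simp⟩

theorem wordBracket_cons {d : ℕ} (V : Fin 2 → (Fin d → ℝ) → (Fin d → ℝ)) (i : Fin 2)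
    {w : List (Fin 2)} (hw : w ≠ []) :
    wordBracket V (i :: w) = lieBracketVF (V i) (wordBracket V w) := by
  obtain ⟨j, l, rfl⟩ := List.exists_cons_of_ne_nil hw
  rfl

section DriftField

variable {d : ℕ} (hd : 3 ≤ d) (σ : Fin 2 → Fin d → MvPolynomial (Fin 2) ℝ)

theorem driftField_eq_polyField (i : Fin 2) :
    driftField d hd σ i =
      polyField (by omega) (fun j => if (j : ℕ) = (i : ℕ) then 1 else 0) (σ i) :=
  rfl

theorem lieBracketVF_driftField_polyField (i : Fin 2) (c : Fin d → ℝ)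
    (q : Fin d → MvPolynomial (Fin 2) ℝ) :
    lieBracketVF (driftField d hd σ i) (polyField (by omega) c q) =
      polyField (by omega) 0 (fun j => pderiv i (q j) -
        pderivAlong (fun k => c (Fin.castLE (by omega) k)) (σ i j)) := by
  rw [driftField_eq_polyField, lieBracketVF_polyField]
  simp only [pderivAlong_indicator_castLE]

theorem wordBracket_driftField_append_pair (l : List (Fin 2)) (a b : Fin 2) :
    wordBracket (driftField d hd σ) (l ++ [a, b]) =
      polyField (by omega) 0 (fun j => (l ++ [a]).foldr (fun i => pderiv i) (σ b j) -
        (l ++ [b]).foldr (fun i => pderiv i) (σ a j)) := by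
  induction l with
  | nil =>
    show lieBracketVF _ (driftField d hd σ b) = _
    rw [driftField_eq_polyField hd σ b, lieBracketVF_driftField_polyField]
    simp only [pderivAlong_indicator_castLE, List.nil_append, List.foldr_cons, List.foldr_nil]
  | cons i l ih =>
    rw [List.cons_append, wordBracket_cons _ _ (by simp), ih,
      lieBracketVF_driftField_polyField]
    simp only [List.cons_append, List.foldr_cons, map_sub, Pi.zero_apply, pderivAlong_zero,
      sub_zero]

end DriftField

theorem stmt9_general (d n : ℕ) (hd : 3 ≤ d)
    (σ : Fin 2 → Fin d → MvPolynomial (Fin 2) ℝ)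
    (hdeg : ∀ i j, (σ i j).totalDegree ≤ n)
    (I : List (Fin 2)) (hlen : n + 2 ≤ I.length) :
    ∀ x : Fin d → ℝ, wordBracket (driftField d hd σ) I x = 0 := by
  obtain ⟨l, a, b, rfl⟩ := List.exists_eq_append_pair (by omega : 2 ≤ I.length)
  have hvanish : ∀ i j c, (l ++ [c]).foldr (fun i => pderiv i) (σ i j) = 0 := fun i j c =>
    foldr_pderiv_eq_zero_of_totalDegree_lt _ _
      ((hdeg i j).trans_lt (by simp only [List.length_append, List.length_cons] at hlen ⊢; omega))
  intro x
  rw [wordBracket_driftField_append_pair]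
  funext j
  simp [polyField, hvanish]

/-- for any word `I ∈ {1,2}^N` of length `N ≥ n + 2`, the iterated Lie
bracket `V_I` vanishes identically on `ℝ^d`; in particular all iterated brackets of
`V₁, V₂` involving at least `n + 1` bracket operations vanish, so `{V₁, V₂}` generates a
nilpotent Lie algebra of vector fields. -/
theorem stmt9 (d n : ℕ) (hd : 3 ≤ d) (hn : 1 ≤ n)
    (σ : Fin 2 → Fin d → MvPolynomial (Fin 2) ℝ)
    (hdeg : ∀ i j, (σ i j).totalDegree ≤ n)
    (I : List (Fin 2)) (hlen : n + 2 ≤ I.length) :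
    ∀ x : Fin d → ℝ, wordBracket (driftField d hd σ) I x = 0 :=
  stmt9_general d n hd σ hdeg I hlen
end
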